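/- Let A be the operator x^{3/2} exp((1/(r+1)) x^{-1} ∑_{i=0}^r (λ x d/dx)^i x (λ x d/dx)^{r-i}) x^{-1/2}. Then A x^n = exp((λ^r/(r+1))((n+1/2)^{r+1} - (n-1/2)^{r+1})) x^{n+1} for all n. -/
import Mathlib


/-- The operator `ŷ = λ x d/dx`. -/
noncomputable def yOp (l : ℝ) (f : ℝ → ℝ) : ℝ → ℝ := fun x => l * x * deriv f x

/-- The operator `(1/(r+1)) x^{-1} ∑_{i=0}^r (λ x d/dx)^i x (λ x d/dx)^{r-i}`. -/
noncomputable def sumOp (r : ℕ) (l : ℝ) (g : ℝ → ℝ) : ℝ → ℝ := fun x =>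
  (1 / ((r : ℝ) + 1)) * x⁻¹ *
    ∑ i ∈ Finset.range (r + 1), ((yOp l)^[i] fun t => t * (yOp l)^[r - i] g t) x

/-- The exponential of an operator, `e^T = ∑_{k ≥ 0} T^k / k!` (applied pointwise). -/
noncomputable def expOp (T : (ℝ → ℝ) → ℝ → ℝ) (g : ℝ → ℝ) : ℝ → ℝ := fun x =>
  ∑' k : ℕ, (T^[k] g) x / (Nat.factorial k : ℝ)

/-- The operator `A = x^{3/2} exp((1/(r+1)) x^{-1} ∑_{i=0}^r (λ x d/dx)^i x (λ x d/dx)^{r-i}) x^{-1/2}`. -/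
noncomputable def opA (r : ℕ) (l : ℝ) (f : ℝ → ℝ) : ℝ → ℝ := fun x =>
  x ^ ((3 : ℝ) / 2) * expOp (sumOp r l) (fun t => t ^ (-(1 : ℝ) / 2) * f t) x

/-- `yOp` only depends on the values of the function on `Ioi 0`. -/
lemma yOp_congr (l : ℝ) {f g : ℝ → ℝ} (h : Set.EqOn f g (Set.Ioi 0)) :
    Set.EqOn (yOp l f) (yOp l g) (Set.Ioi 0) := by
  intro x hx
  have hd : deriv f x = deriv g x :=
    Filter.EventuallyEq.deriv_eq (Filter.eventuallyEq_of_mem (isOpen_Ioi.mem_nhds hx) h)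
  simp [yOp, hd]

lemma yOp_iter_congr (l : ℝ) (i : ℕ) {f g : ℝ → ℝ} (h : Set.EqOn f g (Set.Ioi 0)) :
    Set.EqOn ((yOp l)^[i] f) ((yOp l)^[i] g) (Set.Ioi 0) := by
  induction i with
  | zero => simpa using h
  | succ i ih =>
    simp only [Function.iterate_succ_apply']
    exact yOp_congr l ih

/-- `yOp` iterated on a monomial `c * x ^ a`. -/
lemma yOp_iter_monomial (l a c : ℝ) (i : ℕ) :
    Set.EqOn ((yOp l)^[i] fun t => c * t ^ a) (fun t => c * (l * a) ^ i * t ^ a)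
      (Set.Ioi 0) := by
  induction i with
  | zero => intro x hx; simp
  | succ i ih =>
    intro x hx
    have hx0 : (0:ℝ) < x := hx
    simp only [Function.iterate_succ_apply']
    have hd : deriv ((yOp l)^[i] fun t => c * t ^ a) x
        = deriv (fun t => c * (l * a) ^ i * t ^ a) x :=
      Filter.EventuallyEq.deriv_eq (Filter.eventuallyEq_of_mem (isOpen_Ioi.mem_nhds hx) ih)
    have hda : HasDerivAt (fun t : ℝ => c * (l * a) ^ i * t ^ a)
        (c * (l * a) ^ i * (a * x ^ (a - 1))) x :=
      (Real.hasDerivAt_rpow_const (Or.inl hx0.ne')).const_mul _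
    have hxa : x ^ (a - 1) * x = x ^ a := by
      rw [← Real.rpow_add_one hx0.ne']; ring_nf
    simp only [yOp, hd, hda.deriv]
    calc l * x * (c * (l * a) ^ i * (a * x ^ (a - 1)))
        = c * ((l * a) ^ i * (l * a)) * (x ^ (a - 1) * x) := by ring
      _ = c * (l * a) ^ (i + 1) * x ^ a := by rw [hxa, pow_succ]

lemma sumOp_congr (r : ℕ) (l : ℝ) {f g : ℝ → ℝ} (h : Set.EqOn f g (Set.Ioi 0)) :
    Set.EqOn (sumOp r l f) (sumOp r l g) (Set.Ioi 0) := by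
  intro x hx
  unfold sumOp
  congr 1
  refine Finset.sum_congr rfl fun i _ => ?_
  refine yOp_iter_congr l i (fun t ht => ?_) hx
  simp only [yOp_iter_congr l (r - i) h ht]

/-- `sumOp` acting on a monomial `c * x ^ a`. -/
lemma sumOp_monomial (r : ℕ) (l a c : ℝ) :
    Set.EqOn (sumOp r l fun t => c * t ^ a)
      (fun t => c * (l ^ r / ((r : ℝ) + 1) * ((a + 1) ^ (r + 1) - a ^ (r + 1))) * t ^ a)
      (Set.Ioi 0) := by
  intro x hx
  have hx0 : (0:ℝ) < x := hx
  unfold sumOp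
  have hterm : ∀ i ∈ Finset.range (r + 1),
      ((yOp l)^[i] fun t => t * (yOp l)^[r - i] (fun t => c * t ^ a) t) x
        = c * (l * a) ^ (r - i) * (l * (a + 1)) ^ i * x ^ (a + 1) := by
    intro i hi
    have h1 : Set.EqOn (fun t => t * (yOp l)^[r - i] (fun t => c * t ^ a) t)
        (fun t => (c * (l * a) ^ (r - i)) * t ^ (a + 1)) (Set.Ioi 0) := by
      intro t ht
      have ht0 : (0:ℝ) < t := ht
      simp only
      rw [yOp_iter_monomial l a c (r - i) ht, Real.rpow_add_one ht0.ne']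
      ring
    rw [yOp_iter_congr l i h1 hx, yOp_iter_monomial l (a + 1) _ i hx]
  rw [Finset.sum_congr rfl hterm]
  have hsum : ∑ i ∈ Finset.range (r + 1),
      c * (l * a) ^ (r - i) * (l * (a + 1)) ^ i * x ^ (a + 1)
      = c * l ^ r * ((a + 1) ^ (r + 1) - a ^ (r + 1)) * x ^ (a + 1) := by
    have key : ∑ i ∈ Finset.range (r + 1), (a + 1) ^ i * a ^ (r - i)
        = (a + 1) ^ (r + 1) - a ^ (r + 1) := by
      have := geom_sum₂_mul (a + 1) a (r + 1)
      simp only [add_sub_cancel_left, mul_one] at this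
      rw [← this]
      refine Finset.sum_congr rfl fun i hi => ?_
      congr 2
    calc ∑ i ∈ Finset.range (r + 1), c * (l * a) ^ (r - i) * (l * (a + 1)) ^ i * x ^ (a + 1)
        = (c * l ^ r * x ^ (a + 1)) * ∑ i ∈ Finset.range (r + 1), (a + 1) ^ i * a ^ (r - i) := by
          rw [Finset.mul_sum]
          refine Finset.sum_congr rfl fun i hi => ?_
          have hir : r - i + i = r := by
            simp only [Finset.mem_range] at hi; omega
          have hl : l ^ (r - i) * l ^ i = l ^ r := by rw [← pow_add, hir]
          rw [mul_pow, mul_pow, ← hl]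
          ring
      _ = _ := by rw [key]; ring
  rw [hsum]
  have hxa : x⁻¹ * x ^ (a + 1) = x ^ a := by
    rw [Real.rpow_add_one hx0.ne']
    field_simp
  calc 1 / ((r:ℝ) + 1) * x⁻¹ * (c * l ^ r * ((a + 1) ^ (r + 1) - a ^ (r + 1)) * x ^ (a + 1))
      = c * l ^ r * ((a + 1) ^ (r + 1) - a ^ (r + 1)) * (1 / ((r:ℝ) + 1)) * (x⁻¹ * x ^ (a + 1)) := by
        ring
    _ = _ := by rw [hxa]; ring

/-- Iterates of `sumOp` on a monomial. -/
lemma sumOp_iter_monomial (r : ℕ) (l a : ℝ) (k : ℕ) :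
    Set.EqOn ((sumOp r l)^[k] fun t => t ^ a)
      (fun t => (l ^ r / ((r : ℝ) + 1) * ((a + 1) ^ (r + 1) - a ^ (r + 1))) ^ k * t ^ a)
      (Set.Ioi 0) := by
  set C : ℝ := l ^ r / ((r : ℝ) + 1) * ((a + 1) ^ (r + 1) - a ^ (r + 1)) with hC
  induction k with
  | zero => intro x hx; simp
  | succ k ih =>
    intro x hx
    simp only [Function.iterate_succ_apply']
    rw [sumOp_congr r l ih hx, sumOp_monomial r l a (C ^ k) hx, ← hC, pow_succ]

lemma expOp_iter_congr (r : ℕ) (l : ℝ) (k : ℕ) {f g : ℝ → ℝ}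
    (h : Set.EqOn f g (Set.Ioi 0)) :
    Set.EqOn ((sumOp r l)^[k] f) ((sumOp r l)^[k] g) (Set.Ioi 0) := by
  induction k with
  | zero => simpa using h
  | succ k ih =>
    simp only [Function.iterate_succ_apply']
    exact sumOp_congr r l ih

/-- `A x^n = exp((λ^r/(r+1))((n+1/2)^{r+1} - (n-1/2)^{r+1})) x^{n+1}`
(acting on monomials `x^n`, `n ∈ ℤ`, for `x > 0`). -/
theorem opA_on_monomials (r : ℕ) (hr : 0 < r) (l : ℝ) (n : ℤ) (x : ℝ) (hx : 0 < x) :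
    opA r l (fun t => t ^ (n : ℝ)) x =
      Real.exp (l ^ r / ((r : ℝ) + 1) *
          (((n : ℝ) + 1 / 2) ^ (r + 1) - ((n : ℝ) - 1 / 2) ^ (r + 1))) *
        x ^ ((n : ℝ) + 1) := by
  set a : ℝ := (n : ℝ) - 1 / 2 with ha
  set C : ℝ := l ^ r / ((r : ℝ) + 1) * ((a + 1) ^ (r + 1) - a ^ (r + 1)) with hC
  have hg : Set.EqOn (fun t : ℝ => t ^ (-(1 : ℝ) / 2) * t ^ (n : ℝ))
      (fun t : ℝ => t ^ a) (Set.Ioi 0) := by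
    intro t ht
    have ht0 : (0:ℝ) < t := ht
    simp only
    rw [← Real.rpow_add ht0, ha]
    ring_nf
  have hterm : ∀ k : ℕ, ((sumOp r l)^[k] fun t : ℝ => t ^ (-(1 : ℝ) / 2) * t ^ (n : ℝ)) x
      = C ^ k * x ^ a := by
    intro k
    rw [expOp_iter_congr r l k hg hx, sumOp_iter_monomial r l a k hx]
  have hexp : expOp (sumOp r l) (fun t : ℝ => t ^ (-(1 : ℝ) / 2) * t ^ (n : ℝ)) x
      = Real.exp C * x ^ a := by
    unfold expOp
    simp only [hterm]
    have : ∀ k : ℕ, C ^ k * x ^ a / (Nat.factorial k : ℝ)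
        = C ^ k / (Nat.factorial k : ℝ) * x ^ a := by intro k; ring
    simp only [this]
    rw [tsum_mul_right]
    congr 1
    rw [Real.exp_eq_exp_ℝ, NormedSpace.exp_eq_tsum_div]
  show x ^ ((3:ℝ)/2) * expOp (sumOp r l) (fun t : ℝ => t ^ (-(1 : ℝ) / 2) * t ^ (n : ℝ)) x = _
  rw [hexp]
  have hxpow : x ^ ((3:ℝ)/2) * x ^ a = x ^ ((n : ℝ) + 1) := by
    rw [← Real.rpow_add hx, ha]
    ring_nf
  have hCval : C = l ^ r / ((r : ℝ) + 1) *
      (((n : ℝ) + 1 / 2) ^ (r + 1) - ((n : ℝ) - 1 / 2) ^ (r + 1)) := by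
    rw [hC, ha]; ring_nf
  calc x ^ ((3:ℝ)/2) * (Real.exp C * x ^ a)
      = Real.exp C * (x ^ ((3:ℝ)/2) * x ^ a) := by ring
    _ = _ := by rw [hxpow, hCval]
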